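/- Let G and G' be labelled directed graphs, 𝒯 a finite set of templates, 𝒩 a c-bounded L-layer 𝒯-GNN, and l ≤ L. If (v,v') ∈ V×V' are l-c-𝒯-bisimilar, then v and v' have the same feature vectors at the l-th layer of 𝒩, i.e., λ^l(v) = λ^l(v'). -/
import Mathlib


set_option maxHeartbeats 1000000

attribute [local instance 10] Classical.propDecidable

/-- A template `T = (V, E⁺, E⁻, r)`: vertex set `Fin (n+1)` (cardinality `n+1`),
root `0`, edges `pos`, non-edges `neg`, with `pos ∩ neg = ∅`. -/
structure Template where
  n : ℕ
  pos : Finset (Fin (n + 1) × Fin (n + 1))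
  neg : Finset (Fin (n + 1) × Fin (n + 1))
  disj : ∀ p, ¬(p ∈ pos ∧ p ∈ neg)

/-- A labelled directed graph with labels in `Λ`: a finite vertex set (a finite
subset of `ℕ`), an edge relation `E ⊆ V × V`, and a labelling of the nodes. -/
structure LGraph (Λ : Type) where
  verts : Finset ℕ
  edge : ℕ → ℕ → Prop
  lab : ℕ → Λ
  edge_mem : ∀ u w, edge u w → u ∈ verts ∧ w ∈ verts

/-- `f` is a template embedding of `T` into the pointed graph `(G, w)`:
an injective map sending the root to `w`, `E⁺`-pairs to edges and `E⁻`-pairs to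
non-edges. -/
def IsEmb {Λ : Type} (T : Template) (G : LGraph Λ) (w : ℕ) (f : Fin (T.n + 1) → ℕ) : Prop :=
  Function.Injective f ∧ f 0 = w ∧ (∀ i, f i ∈ G.verts) ∧
    (∀ p ∈ T.pos, G.edge (f p.1) (f p.2)) ∧ (∀ p ∈ T.neg, ¬ G.edge (f p.1) (f p.2))

/-- The (finite) set `emb(T,(G,w))` of template embeddings of `T` into `(G, w)`. -/
noncomputable def embFinset {Λ : Type} (T : Template) (G : LGraph Λ) (w : ℕ) :
    Finset (Fin (T.n + 1) → ℕ) :=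
  (Fintype.piFinset fun _ : Fin (T.n + 1) => G.verts).filter (IsEmb T G w)

/-- Forth condition: any `k` pairwise distinct template embeddings of `T` at `(G,v)`
can be matched by `k` pairwise distinct embeddings at `(G',v')`, pointwise related
by `Z`. -/
def Forth {Λ : Type} (Z : ℕ → ℕ → Prop) (T : Template) (G G' : LGraph Λ)
    (v v' : ℕ) (k : ℕ) : Prop :=
  ∀ F : Fin k → (Fin (T.n + 1) → ℕ), Function.Injective F → (∀ i, IsEmb T G v (F i)) →
    ∃ F' : Fin k → (Fin (T.n + 1) → ℕ), Function.Injective F' ∧ (∀ i, IsEmb T G' v' (F' i)) ∧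
      ∀ i u, Z (F i u) (F' i u)

/-- `Z` is a graded `l`-`𝒯`-bisimulation between `G` and `G'`, where the allowed
multiplicities `k` in the back-and-forth conditions are those satisfying `P`. -/
def IsBisimP {Λ : Type} (𝒯 : Finset Template) (P : ℕ → Prop) (G G' : LGraph Λ) :
    ℕ → (ℕ → ℕ → Prop) → Prop
  | 0, Z => ∀ v v', Z v v' → G.lab v = G'.lab v'
  | l + 1, Z => ∃ Z', IsBisimP 𝒯 P G G' l Z' ∧
      ∀ v v', Z v v' → Z' v v' ∧ ∀ T ∈ 𝒯, ∀ k, P k →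
        Forth Z' T G G' v v' k ∧ Forth (fun a b => Z' b a) T G' G v' v k

/-- `(G,v)` and `(G',v')` are graded `l`-`𝒯`-bisimilar. -/
def GBisimilar {Λ : Type} (𝒯 : Finset Template) (l : ℕ) (G : LGraph Λ) (v : ℕ)
    (G' : LGraph Λ) (v' : ℕ) : Prop :=
  ∃ Z, IsBisimP 𝒯 (fun k => 1 ≤ k) G G' l Z ∧ Z v v'

/-- `(G,v)` and `(G',v')` are `l`-`c`-`𝒯`-bisimilar (multiplicities restricted to `k ≤ c`). -/
def BBisimilar {Λ : Type} (𝒯 : Finset Template) (l c : ℕ) (G : LGraph Λ) (v : ℕ)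
    (G' : LGraph Λ) (v' : ℕ) : Prop :=
  ∃ Z, IsBisimP 𝒯 (fun k => 1 ≤ k ∧ k ≤ c) G G' l Z ∧ Z v v'

/-- `A↾c`: cap all multiplicities of a multiset at `c`. -/
noncomputable def mcap {α : Type} (c : ℕ) (m : Multiset α) : Multiset α :=
  m.toFinset.val.bind fun a => Multiset.replicate (min c (m.count a)) a

/-- The `𝒯`-WL colouring of `G` after `l` rounds, using `hash0` for the initial
colouring and `hash` for the refinement rounds; at each round the new colour of `v`
hashes its previous colour together with, for each template `T ∈ 𝒯`, the multiset of
`T`-labelled colourings induced by the template embeddings at `v`. -/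
noncomputable def colWL {Λ C : Type} (𝒯 : Finset Template) (hash0 : Λ → C)
    (hash : C → ((T : {x // x ∈ 𝒯}) → Multiset (Fin (T.1.n + 1) → C)) → C)
    (G : LGraph Λ) : ℕ → ℕ → C
  | 0, v => hash0 (G.lab v)
  | l + 1, v =>
      hash (colWL 𝒯 hash0 hash G l v)
        (fun T => (embFinset T.1 G v).val.map
          (fun f => fun u => colWL 𝒯 hash0 hash G l (f u)))

/-- A multiset function is `c`-bounded if its value is unchanged when all
multiplicities larger than `c` are replaced by `c`. -/
def CBoundedFun {α β : Type} (c : ℕ) (g : Multiset α → β) : Prop :=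
  ∀ m, g m = g (mcap c m)

/-- An `nAr`-ary `L`-layer `𝒯`-GNN with feature dimension `d`: templates from `𝒯`,
template-aggregation functions (invariant under root-fixing label-preserving template
automorphisms), outer multiset aggregation functions, combination functions, and a
Boolean classification function. -/
structure TGNN (𝒯 : Finset Template) (d nAr L : ℕ) where
  temp : Fin L → Fin nAr → Template
  temp_mem : ∀ l j, temp l j ∈ 𝒯
  aggT : (l : Fin L) → (j : Fin nAr) → ((Fin ((temp l j).n + 1) → (Fin d → ℝ)) → (Fin d → ℝ))
  aggT_inv : ∀ (l : Fin L) (j : Fin nAr) (σ : Equiv.Perm (Fin ((temp l j).n + 1)))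
      (lab₁ lab₂ : Fin ((temp l j).n + 1) → (Fin d → ℝ)),
      σ 0 = 0 →
      (∀ p : Fin ((temp l j).n + 1) × Fin ((temp l j).n + 1),
        p ∈ (temp l j).pos ↔ (σ p.1, σ p.2) ∈ (temp l j).pos) →
      (∀ p : Fin ((temp l j).n + 1) × Fin ((temp l j).n + 1),
        p ∈ (temp l j).neg ↔ (σ p.1, σ p.2) ∈ (temp l j).neg) →
      (∀ u, u ≠ 0 → lab₁ u = lab₂ (σ u)) →
      aggT l j lab₁ = aggT l j lab₂
  agg : Fin L → Fin nAr → Multiset (Fin d → ℝ) → (Fin d → ℝ)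
  comb : Fin L → (Fin d → ℝ) → (Fin nAr → (Fin d → ℝ)) → (Fin d → ℝ)
  cls : (Fin d → ℝ) → Bool

/-- The feature vector `λ^l(v)` of node `v` after `l` layers of the `𝒯`-GNN `N` on
input graph `G`. -/
noncomputable def TGNN.feat {𝒯 : Finset Template} {d nAr L : ℕ} (N : TGNN 𝒯 d nAr L)
    (G : LGraph (Fin d → ℝ)) : ℕ → ℕ → (Fin d → ℝ)
  | 0, v => G.lab v
  | l + 1, v =>
      if h : l < L then
        N.comb ⟨l, h⟩ (N.feat G l v)
          (fun j => N.agg ⟨l, h⟩ j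
            ((embFinset (N.temp ⟨l, h⟩ j) G v).val.map
              (fun f => N.aggT ⟨l, h⟩ j (fun u => N.feat G l (f u)))))
      else fun _ => 0

/-- A `𝒯`-GNN is `c`-bounded if all its outer aggregation functions are `c`-bounded. -/
def TGNN.IsCBounded {𝒯 : Finset Template} {d nAr L : ℕ} (N : TGNN 𝒯 d nAr L) (c : ℕ) : Prop :=
  ∀ l j, CBoundedFun c (N.agg l j)

def boolToReal (b : Bool) : ℝ := if b then 1 else 0

/-- Identify a `{0,1}^d`-labelled graph with a real-vector labelled graph. -/
def LGraph.toReal {d : ℕ} (G : LGraph (Fin d → Bool)) : LGraph (Fin d → ℝ) :=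
  ⟨G.verts, G.edge, fun v i => boolToReal (G.lab v i), G.edge_mem⟩

/-- Initialize real feature vectors of dimension `d'` from `{0,1}^a`-labels
(the first `a` coordinates hold the truth values of the propositions, the rest are `0`). -/
def initG {a : ℕ} (d' : ℕ) (G : LGraph (Fin a → Bool)) : LGraph (Fin d' → ℝ) :=
  ⟨G.verts, G.edge, fun v i => if h : (i : ℕ) < a then boolToReal (G.lab v ⟨i, h⟩) else 0,
    G.edge_mem⟩

/-- Formulae of graded template modal logic `GML(𝒯)` over propositions `AP`
(`⊤` included; a modality `⟨T⟩^{≥j}(φ₁,…,φ_{n_T})` takes `n_T = |V_T| - 1` arguments). -/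
inductive GML (AP : Type) : Type
  | top : GML AP
  | prop : AP → GML AP
  | neg : GML AP → GML AP
  | and : GML AP → GML AP → GML AP
  | dia : (T : Template) → ℕ → (Fin T.n → GML AP) → GML AP

/-- Semantics of `GML(𝒯)` on pointed labelled graphs:
`(G,v) ⊨ ⟨T⟩^{≥j}(φ⃗)` iff at least `j` embeddings `f ∈ emb(T,(G,v))` satisfy
`(G, f(i)) ⊨ φᵢ` for all `1 ≤ i ≤ n_T`. -/
def Sat {AP : Type} (G : LGraph (AP → Bool)) : GML AP → ℕ → Prop
  | .top, _ => True
  | .prop p, v => G.lab v p = true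
  | .neg φ, v => ¬ Sat G φ v
  | .and φ ψ, v => Sat G φ v ∧ Sat G ψ v
  | .dia T j φs, v =>
      j ≤ ((embFinset T G v).filter
        (fun f => ∀ i : Fin T.n, Sat G (φs i) (f i.succ))).card

/-- Modal depth. -/
def GML.md {AP : Type} : GML AP → ℕ
  | .top => 0
  | .prop _ => 0
  | .neg φ => φ.md
  | .and φ ψ => max φ.md ψ.md
  | .dia _ _ φs => 1 + Finset.univ.sup fun i => (φs i).md

/-- Counting bound: the least `c` such that every modality `⟨T⟩^{≥j}` occurring in the
formula has `j ≤ c`. -/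
def GML.cb {AP : Type} : GML AP → ℕ
  | .top => 0
  | .prop _ => 0
  | .neg φ => φ.cb
  | .and φ ψ => max φ.cb ψ.cb
  | .dia _ j φs => max j (Finset.univ.sup fun i => (φs i).cb)

/-- Syntactic depth: counts both Boolean connectives and modalities along the deepest
branch of the syntax tree. -/
def GML.sd {AP : Type} : GML AP → ℕ
  | .top => 0
  | .prop _ => 0
  | .neg φ => 1 + φ.sd
  | .and φ ψ => 1 + max φ.sd ψ.sd
  | .dia _ _ φs => 1 + Finset.univ.sup fun i => (φs i).sd

/-- Well-formedness of a `GML(𝒯)` formula: all templates come from `𝒯` and all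
grades satisfy `j ≥ 1`. -/
def GML.Wf {AP : Type} (𝒯 : Finset Template) : GML AP → Prop
  | .top => True
  | .prop _ => True
  | .neg φ => φ.Wf 𝒯
  | .and φ ψ => φ.Wf 𝒯 ∧ ψ.Wf 𝒯
  | .dia T j φs => T ∈ 𝒯 ∧ 1 ≤ j ∧ ∀ i, (φs i).Wf 𝒯

/-- Finite conjunction (`⊤` for the empty list). -/
def bigConj {AP : Type} : List (GML AP) → GML AP
  | [] => .top
  | φ :: rest => .and φ (bigConj rest)

/-- `|S^{(G,v)}_{T,φ⃗}|`: the number of embeddings `f ∈ emb(T,(G,v))` with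
`(G, f(i)) ⊨ φᵢ` for all `1 ≤ i ≤ n_T`. -/
noncomputable def Scard {AP : Type} (G : LGraph (AP → Bool)) (T : Template) (v : ℕ)
    (φs : Fin T.n → GML AP) : ℕ :=
  ((embFinset T G v).filter (fun f => ∀ i : Fin T.n, Sat G (φs i) (f i.succ))).card

/-- The `l`-characteristic formula `χ^l_{(G,v)}`. -/
noncomputable def charU {AP : Type} [Fintype AP] (𝒯 : Finset Template) :
    ℕ → LGraph (AP → Bool) → ℕ → GML AP
  | 0 => fun G v =>
      bigConj ((Finset.univ : Finset AP).toList.map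
        (fun p => if G.lab v p then GML.prop p else GML.neg (GML.prop p)))
  | l + 1 => fun G v =>
      GML.and (charU 𝒯 l G v)
        (bigConj (𝒯.toList.map (fun T =>
          GML.and
            (bigConj ((embFinset T G v).toList.map (fun f =>
              GML.dia T (Scard G T v (fun i => charU 𝒯 l G (f i.succ)))
                (fun i => charU 𝒯 l G (f i.succ)))))
            (GML.neg (GML.dia T (Scard G T v (fun _ => GML.top) + 1)
              (fun _ => GML.top))))))

/-- `reps m` is a system of representatives for the `m`-`c`-`𝒯`-bisimilarity classes of
finite pointed labelled graphs: every representative is a genuine pointed graph, every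
pointed graph is `m`-`c`-`𝒯`-bisimilar to some representative, and distinct
representatives are non-bisimilar. -/
def RepSystem {AP : Type} (𝒯 : Finset Template) (c : ℕ)
    (reps : ℕ → Finset (LGraph (AP → Bool) × ℕ)) : Prop :=
  ∀ m : ℕ,
    (∀ q ∈ reps m, q.2 ∈ q.1.verts) ∧
    (∀ (G : LGraph (AP → Bool)) (v : ℕ), v ∈ G.verts →
      ∃ q ∈ reps m, BBisimilar 𝒯 m c q.1 q.2 G v) ∧
    (∀ q ∈ reps m, ∀ q' ∈ reps m, BBisimilar 𝒯 m c q.1 q.2 q'.1 q'.2 → q = q')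

/-- The bounded `l`-`c`-characteristic formula `χ^{l,c}_{(G,v)}`, relative to a chosen
system `reps` of representatives of the bounded bisimilarity classes. -/
noncomputable def charB {AP : Type} [Fintype AP] (𝒯 : Finset Template) (c : ℕ)
    (reps : ℕ → Finset (LGraph (AP → Bool) × ℕ)) :
    ℕ → LGraph (AP → Bool) → ℕ → GML AP
  | 0 => fun G v =>
      bigConj ((Finset.univ : Finset AP).toList.map
        (fun p => if G.lab v p then GML.prop p else GML.neg (GML.prop p)))
  | l + 1 => fun G v =>
      GML.and (charB 𝒯 c reps l G v)
        (bigConj (𝒯.toList.map (fun T =>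
          GML.and
            (bigConj ((embFinset T G v).toList.map (fun f =>
              GML.dia T (min c (Scard G T v (fun i => charB 𝒯 c reps l G (f i.succ))))
                (fun i => charB 𝒯 c reps l G (f i.succ)))))
            (bigConj (((Fintype.piFinset (fun _ : Fin T.n => reps l)).filter
                (fun t => Scard G T v
                  (fun i => charB 𝒯 c reps l (t i).1 (t i).2) + 1 ≤ c)).toList.map
              (fun t => GML.neg (GML.dia T
                  (Scard G T v (fun i => charB 𝒯 c reps l (t i).1 (t i).2) + 1)
                  (fun i => charB 𝒯 c reps l (t i).1 (t i).2))))))))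

/-- Standard graded forth condition on out-neighbours. -/
def StdForth {Λ : Type} (Z : ℕ → ℕ → Prop) (G G' : LGraph Λ) (v v' : ℕ) (k : ℕ) : Prop :=
  ∀ us : Fin k → ℕ, Function.Injective us → (∀ i, G.edge v (us i)) →
    ∃ us' : Fin k → ℕ, Function.Injective us' ∧ (∀ i, G'.edge v' (us' i)) ∧
      ∀ i, Z (us i) (us' i)

/-- `Z` is a standard graded `l`-bisimulation (the relation underlying standard 1-WL
colour refinement). -/
def IsStdBisim {Λ : Type} (G G' : LGraph Λ) : ℕ → (ℕ → ℕ → Prop) → Prop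
  | 0, Z => ∀ v v', Z v v' → G.lab v = G'.lab v'
  | l + 1, Z => ∃ Z', IsStdBisim G G' l Z' ∧
      ∀ v v', Z v v' → Z' v v' ∧ ∀ k, 1 ≤ k →
        StdForth Z' G G' v v' k ∧ StdForth (fun a b => Z' b a) G' G v' v k

/-- `(G,v)` and `(G',v')` are standard graded `l`-bisimilar. -/
def StdBisimilar {Λ : Type} (l : ℕ) (G : LGraph Λ) (v : ℕ) (G' : LGraph Λ) (v' : ℕ) : Prop :=
  ∃ Z, IsStdBisim G G' l Z ∧ Z v v'

/-- The edge template `T₁ = ({r,a}, E⁺ = {(r,a)}, E⁻ = ∅, r)`. -/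
def T1 : Template := ⟨1, {(0, 1)}, ∅, by decide⟩

/-- The triangle template `T△ = ({r,a,b}, E⁺ = {(r,a),(a,b),(b,r)}, E⁻ = ∅, r)`. -/
def Ttri : Template := ⟨2, {(0, 1), (1, 2), (2, 0)}, ∅, by decide⟩

/-- The directed 3-cycle, all nodes with the same constant label. -/
def G3 : LGraph Unit where
  verts := {0, 1, 2}
  edge u w := (u = 0 ∧ w = 1) ∨ (u = 1 ∧ w = 2) ∨ (u = 2 ∧ w = 0)
  lab _ := ()
  edge_mem := by rintro u w (⟨rfl, rfl⟩ | ⟨rfl, rfl⟩ | ⟨rfl, rfl⟩) <;> simp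

/-- The directed 6-cycle, all nodes with the same constant label. -/
def G6 : LGraph Unit where
  verts := Finset.range 6
  edge u w := u < 6 ∧ w = (u + 1) % 6
  lab _ := ()
  edge_mem := by
    rintro u w ⟨hu, rfl⟩
    simp only [Finset.mem_range]
    omega

lemma mem_embFinset {Λ : Type} {T : Template} {G : LGraph Λ} {w : ℕ}
    {f : Fin (T.n + 1) → ℕ} : f ∈ embFinset T G w ↔ IsEmb T G w f := by
  constructor
  · intro h
    exact (Finset.mem_filter.mp h).2
  · intro h
    refine Finset.mem_filter.mpr ⟨?_, h⟩
    rw [Fintype.mem_piFinset]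
    exact h.2.2.1

lemma count_mcap {α : Type} [inst : DecidableEq α] (c : ℕ) (m : Multiset α) (a : α) :
    (mcap c m).count a = min c (m.count a) := by
  have hi : inst = fun a b => Classical.propDecidable (a = b) := by
    funext a b
    exact Subsingleton.elim _ _
  subst hi
  unfold mcap
  rw [Multiset.count_bind]
  have hrepl : ∀ b, Multiset.count a (Multiset.replicate (min c (m.count b)) b)
      = if b = a then min c (m.count a) else 0 := by
    intro b
    rw [Multiset.count_replicate]
    split <;> simp_all
  simp only [hrepl]
  have hsum : (Multiset.map (fun b => if b = a then min c (m.count a) else 0)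
      m.toFinset.val).sum = ∑ b ∈ m.toFinset, (if b = a then min c (m.count a) else 0) := rfl
  rw [hsum, Finset.sum_ite_eq' m.toFinset a (fun _ => min c (m.count a))]
  split
  · rfl
  · rename_i ha
    have : m.count a = 0 := Multiset.count_eq_zero.mpr (by simpa using ha)
    simp [this]

/-- Key counting step: the forth condition bounds capped counts of aggregated
embedding multisets. -/
lemma forth_count_le {Λ β γ : Type} {T : Template} {G G' : LGraph Λ} {v v' : ℕ}
    [instg : DecidableEq γ]
    (Z : ℕ → ℕ → Prop) (featA featB : ℕ → β) (g : (Fin (T.n + 1) → β) → γ)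
    (hfe : ∀ a b, Z a b → featA a = featB b) (c : ℕ) (hc : 1 ≤ c)
    (hF : ∀ k, 1 ≤ k → k ≤ c → Forth Z T G G' v v' k) (bv : γ) :
    min c (((embFinset T G v).val.map (fun f => g (fun u => featA (f u)))).count bv)
      ≤ min c (((embFinset T G' v').val.map (fun f => g (fun u => featB (f u)))).count bv) := by
  classical
  rw [Multiset.count_map, Multiset.count_map]
  have hS : Multiset.card (Multiset.filter (fun f => bv = g (fun u => featA (f u)))
      (embFinset T G v).val)
      = ((embFinset T G v).filter (fun f => bv = g (fun u => featA (f u)))).card := rfl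
  have hS' : Multiset.card (Multiset.filter (fun f => bv = g (fun u => featB (f u)))
      (embFinset T G' v').val)
      = ((embFinset T G' v').filter (fun f => bv = g (fun u => featB (f u)))).card := rfl
  rw [hS, hS']
  set S := (embFinset T G v).filter (fun f => bv = g (fun u => featA (f u))) with hSdef
  set S' := (embFinset T G' v').filter (fun f => bv = g (fun u => featB (f u))) with hS'def
  set k := min c S.card with hk
  rcases Nat.eq_zero_or_pos k with hk0 | hk1
  · simp [hk0]
  · have hkc : k ≤ c := min_le_left _ _
    have hkS : k ≤ S.card := min_le_right _ _
    obtain ⟨t, hts, htcard⟩ := Finset.exists_subset_card_eq hkS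
    -- build k distinct embeddings
    let e : Fin k ≃ {x // x ∈ t} := (Fin.castOrderIso htcard.symm).toEquiv.trans t.equivFin.symm
    let F : Fin k → (Fin (T.n + 1) → ℕ) := fun i => (e i : Fin (T.n + 1) → ℕ)
    have hFinj : Function.Injective F := fun i j hij => by
      apply e.injective
      exact Subtype.ext hij
    have hFmem : ∀ i, F i ∈ t := fun i => (e i).2
    have hFemb : ∀ i, IsEmb T G v (F i) := fun i =>
      mem_embFinset.mp (Finset.mem_filter.mp (hts (hFmem i))).1
    obtain ⟨F', hF'inj, hF'emb, hF'Z⟩ := hF k hk1 hkc F hFinj hFemb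
    have hF'S' : ∀ i, F' i ∈ S' := by
      intro i
      refine Finset.mem_filter.mpr ⟨mem_embFinset.mpr (hF'emb i), ?_⟩
      have hlab : (fun u => featB (F' i u)) = (fun u => featA (F i u)) := by
        funext u
        exact (hfe _ _ (hF'Z i u)).symm
      have hbv : bv = g (fun u => featA (F i u)) :=
        (Finset.mem_filter.mp (hts (hFmem i))).2
      rw [hlab]
      exact hbv
    have himg : (Finset.univ.image F').card = k := by
      rw [Finset.card_image_of_injective _ hF'inj, Finset.card_univ, Fintype.card_fin]
    have hsub : Finset.univ.image F' ⊆ S' := by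
      intro x hx
      obtain ⟨i, _, rfl⟩ := Finset.mem_image.mp hx
      exact hF'S' i
    have : k ≤ S'.card := himg ▸ Finset.card_le_card hsub
    exact le_min hkc this

/-- Main induction: bounded bisimulations preserve GNN features. -/
lemma feat_eq_of_bisim {d nAr L : ℕ} {𝒯 : Finset Template}
    (N : TGNN 𝒯 d nAr L) (c : ℕ) (hc : 1 ≤ c) (hN : N.IsCBounded c)
    (G G' : LGraph (Fin d → ℝ)) :
    ∀ l, l ≤ L → ∀ Z, IsBisimP 𝒯 (fun k => 1 ≤ k ∧ k ≤ c) G G' l Z →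
      ∀ v v', Z v v' → N.feat G l v = N.feat G' l v' := by
  intro l
  induction l with
  | zero =>
      intro _ Z hZ v v' hvv'
      exact hZ v v' hvv'
  | succ l ih =>
      intro hl Z hZ v v' hvv'
      obtain ⟨Z', hZ', hstep⟩ := hZ
      obtain ⟨hZ'vv', hforth⟩ := hstep v v' hvv'
      have hlL : l < L := hl
      have hIH : ∀ a b, Z' a b → N.feat G l a = N.feat G' l b :=
        fun a b hab => ih (Nat.le_of_lt hlL) Z' hZ' a b hab
      show N.feat G (l + 1) v = N.feat G' (l + 1) v'
      simp only [TGNN.feat, dif_pos hlL]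
      have h2 : (fun j => N.agg ⟨l, hlL⟩ j
            ((embFinset (N.temp ⟨l, hlL⟩ j) G v).val.map
              (fun f => N.aggT ⟨l, hlL⟩ j (fun u => N.feat G l (f u)))))
          = (fun j => N.agg ⟨l, hlL⟩ j
            ((embFinset (N.temp ⟨l, hlL⟩ j) G' v').val.map
              (fun f => N.aggT ⟨l, hlL⟩ j (fun u => N.feat G' l (f u))))) := by
        funext j
        set T := N.temp ⟨l, hlL⟩ j with hT
        have hTmem : T ∈ 𝒯 := N.temp_mem _ _
        set gA : (Fin (T.n + 1) → ℕ) → (Fin d → ℝ) :=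
          fun f => N.aggT ⟨l, hlL⟩ j (fun u => N.feat G l (f u)) with hgA
        set gB : (Fin (T.n + 1) → ℕ) → (Fin d → ℝ) :=
          fun f => N.aggT ⟨l, hlL⟩ j (fun u => N.feat G' l (f u)) with hgB
        rw [hN ⟨l, hlL⟩ j, hN ⟨l, hlL⟩ j
          ((embFinset T G' v').val.map gB)]
        have hm : mcap c (Multiset.map gA (embFinset T G v).val)
            = mcap c (Multiset.map gB (embFinset T G' v').val) := by
          refine Multiset.ext.mpr fun b => ?_
          simp only [count_mcap]
          apply le_antisymm
          · exact forth_count_le Z' (N.feat G l) (N.feat G' l)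
              (fun lab => N.aggT ⟨l, hlL⟩ j lab) hIH c hc
              (fun k h1 h2 => (hforth T hTmem k ⟨h1, h2⟩).1) b
          · exact forth_count_le (fun a b => Z' b a) (N.feat G' l) (N.feat G l)
              (fun lab => N.aggT ⟨l, hlL⟩ j lab)
              (fun a b hab => (hIH b a hab).symm) c hc
              (fun k h1 h2 => (hforth T hTmem k ⟨h1, h2⟩).2) b
        rw [hm]
      rw [hIH v v' hZ'vv', h2]

/-- If `(v,v')` are `l`-`c`-`𝒯`-bisimilar and `𝒩` is a `c`-bounded
`L`-layer `𝒯`-GNN with `l ≤ L`, then `v` and `v'` get the same feature vectors at the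
`l`-th layer of `𝒩`. -/
theorem bounded_gnn_invariant_bounded_bisim {d nAr L : ℕ} (𝒯 : Finset Template)
    (N : TGNN 𝒯 d nAr L) (c : ℕ) (hc : 1 ≤ c) (hN : N.IsCBounded c)
    (l : ℕ) (hl : l ≤ L) (G G' : LGraph (Fin d → ℝ)) (v v' : ℕ)
    (hv : v ∈ G.verts) (hv' : v' ∈ G'.verts)
    (hbis : BBisimilar 𝒯 l c G v G' v') :
    N.feat G l v = N.feat G' l v' := by
  obtain ⟨Z, hZ, hvv'⟩ := hbis
  exact feat_eq_of_bisim N c hc hN G G' l hl Z hZ v v' hvv'
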